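/- For every τ > 0, the limit as y → -∞ of e^{τ - y} · erfc((2τ - y)/(2√τ)) equals 0. -/

import Mathlib

/-! For `0 ≤ x ≤ t` one has `t² ≥ x² + (t - x)²`, so the Gaussian tail beyond `x` is at most
`e^{-x²}` times the half-line Gaussian integral `√π / 2`; that is, `erfc x ≤ e^{-x²}`.
For `x = (2τ - y)/(2√τ)` completing the square gives `τ - y - x² = -y²/(4τ)`, so the product
is squeezed between `0` and `e^{-y²/(4τ)}`. -/

open Real Filter Topology

/-- The Gauss error function `erf x = (2/√π) ∫₀^x e^{-t²} dt`. -/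
noncomputable def erf (x : ℝ) : ℝ := (2 / Real.sqrt π) * ∫ t in (0:ℝ)..x, Real.exp (-t ^ 2)

/-- The complementary error function `erfc x = 1 - erf x`. -/
noncomputable def erfc (x : ℝ) : ℝ := 1 - erf x

open MeasureTheory Set

lemma integrable_exp_neg_sq : Integrable fun t : ℝ => exp (-t ^ 2) := by
  simpa using integrable_exp_neg_mul_sq one_pos

lemma integral_Ioi_zero_exp_neg_sq : ∫ t in Ioi (0 : ℝ), exp (-t ^ 2) = √π / 2 := by
  simpa using integral_gaussian_Ioi 1

lemma erfc_eq_integral_Ioi (x : ℝ) : erfc x = 2 / √π * ∫ t in Ioi x, exp (-t ^ 2) := by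
  have hsplit := intervalIntegral.integral_interval_add_Ioi (a := 0) (b := x)
    integrable_exp_neg_sq.integrableOn integrable_exp_neg_sq.integrableOn
  rw [integral_Ioi_zero_exp_neg_sq] at hsplit
  have hπ : 0 < √π := sqrt_pos.2 pi_pos
  rw [erfc, erf, eq_sub_of_add_eq' hsplit]
  field_simp

lemma erfc_nonneg (x : ℝ) : 0 ≤ erfc x := by
  rw [erfc_eq_integral_Ioi]
  exact mul_nonneg (by positivity) (setIntegral_nonneg measurableSet_Ioi fun t _ => (exp_pos _).le)

lemma integral_Ioi_exp_neg_sq_le {x : ℝ} (hx : 0 ≤ x) :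
    ∫ t in Ioi x, exp (-t ^ 2) ≤ exp (-x ^ 2) * (√π / 2) := by
  have hshift : ∫ t in Ioi x, exp (-(t - x) ^ 2) = √π / 2 := by
    rw [← integral_Ioi_zero_exp_neg_sq,
      ← (measurePreserving_add_right volume x).setIntegral_preimage_emb
        (measurableEmbedding_addRight x) _ (Ioi x)]
    simp
  have hpt : ∀ t ∈ Ioi x, exp (-t ^ 2) ≤ exp (-x ^ 2) * exp (-(t - x) ^ 2) := by
    intro t ht
    rw [← exp_add, exp_le_exp]
    nlinarith [mul_nonneg hx (sub_nonneg.2 (le_of_lt ht))]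
  calc ∫ t in Ioi x, exp (-t ^ 2) ≤ ∫ t in Ioi x, exp (-x ^ 2) * exp (-(t - x) ^ 2) :=
        setIntegral_mono_on integrable_exp_neg_sq.integrableOn
          ((integrable_exp_neg_sq.comp_sub_right x).const_mul _).integrableOn measurableSet_Ioi hpt
    _ = exp (-x ^ 2) * (√π / 2) := by rw [integral_const_mul, hshift]

lemma erfc_le_exp_neg_sq {x : ℝ} (hx : 0 ≤ x) : erfc x ≤ exp (-x ^ 2) := by
  have hπ : 0 < √π := sqrt_pos.2 pi_pos
  calc erfc x ≤ 2 / √π * (exp (-x ^ 2) * (√π / 2)) := by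
        rw [erfc_eq_integral_Ioi]
        gcongr
        exact integral_Ioi_exp_neg_sq_le hx
    _ = exp (-x ^ 2) := by field_simp

lemma tendsto_exp_neg_sq_div_atBot {c : ℝ} (hc : 0 < c) :
    Tendsto (fun y : ℝ => exp (-y ^ 2 / c)) atBot (𝓝 0) := by
  rw [tendsto_exp_comp_nhds_zero]
  refine Tendsto.atBot_div_const hc ?_
  simpa [sq] using (tendsto_id (α := ℝ)).atBot_mul_atBot₀ tendsto_id

lemma exp_mul_erfc_le {τ y : ℝ} (hτ : 0 < τ) (hy : y ≤ 2 * τ) :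
    exp (τ - y) * erfc ((2 * τ - y) / (2 * √τ)) ≤ exp (-y ^ 2 / (4 * τ)) := by
  set x := (2 * τ - y) / (2 * √τ) with hx_def
  have hx : 0 ≤ x := div_nonneg (by linarith) (by positivity)
  have hsq : τ - y - x ^ 2 = -y ^ 2 / (4 * τ) := by
    rw [hx_def, div_pow, mul_pow, sq_sqrt hτ.le]
    field_simp
    ring
  calc exp (τ - y) * erfc x ≤ exp (τ - y) * exp (-x ^ 2) := by
        gcongr
        exact erfc_le_exp_neg_sq hx
    _ = exp (-y ^ 2 / (4 * τ)) := by rw [← exp_add, ← sub_eq_add_neg, hsq]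

theorem exp_mul_erfc_tendsto_zero (τ : ℝ) (hτ : 0 < τ) :
    Tendsto (fun y : ℝ => Real.exp (τ - y) * erfc ((2 * τ - y) / (2 * Real.sqrt τ)))
      atBot (𝓝 0) :=
  squeeze_zero' (.of_forall fun _ => mul_nonneg (exp_pos _).le (erfc_nonneg _))
    ((eventually_le_atBot (2 * τ)).mono fun _ => exp_mul_erfc_le hτ)
    (tendsto_exp_neg_sq_div_atBot (by positivity))
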